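/- In the ring of formal power series in x over the polynomial ring ℤ[q], the following identity holds: ∏_{m=1}^{∞} 1/(1 − q^{C(m+1,2)} x^m) − 1 = Σ_{n=1}^{∞} (Σ_{λ ⊢ n} q^{C(n+1,2) − g(λ)}) x^n. Equivalently, for every positive integer n, the coefficient of x^n in the infinite product ∏_{m=1}^{∞} (1 − q^{C(m+1,2)} x^m)^{−1} equals the polynomial Σ_{λ ⊢ n} q^{C(n+1,2) − g(λ)} in q, where the sum ranges over all partitions λ of n. -/

import Mathlib

open scoped Classical

/-- The parts of a partition of `n`, sorted in non-increasing order: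
`λ₁ ≥ λ₂ ≥ … ≥ λ_ℓ`. -/
def sortedParts {n : ℕ} (lam : Nat.Partition n) : List ℕ :=
  lam.parts.sort (· ≥ ·)

/-- The Gini index of a partition of `n`:
`g(λ) = C(n+1,2) − Σ_{i=1}^{n} i·λᵢ` (the parts being padded with zeros to length `n`,
which does not affect the weighted sum). -/
def gini {n : ℕ} (lam : Nat.Partition n) : ℕ :=
  (n + 1).choose 2 -
    ∑ i ∈ Finset.range (sortedParts lam).length, (i + 1) * (sortedParts lam).getD i 0

/-- The inverse `(1 − q^{C(m+1,2)} x^m)⁻¹` in the power series ring `ℤ[q][[x]]`. -/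
noncomputable def ginFactorInv (m : ℕ) : PowerSeries (Polynomial ℤ) :=
  PowerSeries.invOfUnit
    (1 - PowerSeries.C (R := Polynomial ℤ) (Polynomial.X ^ (m + 1).choose 2)
      * PowerSeries.X ^ m) 1

/-!
Expanding each factor `(1 − a_m x^m)⁻¹ = Σ_c a_m^c x^{cm}`, the coefficient of `x^n` in
`∏_{m ≤ N} (1 − a_m x^m)⁻¹` is `Σ_{μ ⊢ n} ∏_{p ∈ μ} a_p` (a partition records how often each
`m` is used). With `a_m = q^{C(m+1,2)}` this is `Σ_{μ ⊢ n} q^{Σ_{p ∈ μ} C(p+1,2)}`, and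
conjugation `λ ↦ λ'` turns it into the claim: the conjugate of `λ` has `λᵢ − λᵢ₊₁` parts equal
to `i`, so by Abel summation `Σ_{p ∈ λ'} C(p+1,2) = Σ_i (λᵢ − λᵢ₊₁) C(i+1,2) = Σ_i i·λᵢ`.
-/

open Finset PowerSeries

section GeomSeries

variable {R : Type*}

noncomputable def geomSeriesXPow [Semiring R] (a : R) (m : ℕ) : R⟦X⟧ :=
  PowerSeries.mk fun k => if m ∣ k then a ^ (k / m) else 0

theorem coeff_mul_geomSeriesXPow [Semiring R] (a : R) {m : ℕ} (hm : 0 < m) (c : ℕ) :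
    coeff (c * m) (geomSeriesXPow a m) = a ^ c := by
  simp [geomSeriesXPow, Nat.mul_div_cancel _ hm]

theorem coeff_geomSeriesXPow_of_not_dvd [Semiring R] (a : R) {m k : ℕ} (h : ¬ m ∣ k) :
    coeff k (geomSeriesXPow a m) = 0 := by
  simp [geomSeriesXPow, h]

theorem coeff_add_geomSeriesXPow [Semiring R] (a : R) {m : ℕ} (hm : 0 < m) (j : ℕ) :
    coeff (m + j) (geomSeriesXPow a m) = a * coeff j (geomSeriesXPow a m) := by
  simp only [geomSeriesXPow, coeff_mk, Nat.dvd_add_self_left]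
  split_ifs
  · rw [add_comm, Nat.add_div_right _ hm, pow_succ']
  · rw [mul_zero]

theorem one_sub_C_mul_X_pow_mul_geomSeriesXPow [CommRing R] (a : R) {m : ℕ} (hm : 0 < m) :
    (1 - C a * X ^ m) * geomSeriesXPow a m = 1 := by
  ext k
  rw [sub_mul, one_mul, map_sub, mul_assoc, coeff_C_mul, coeff_X_pow_mul', coeff_one]
  by_cases hk : m ≤ k
  · obtain ⟨j, rfl⟩ := Nat.exists_eq_add_of_le hk
    rw [if_pos hk, Nat.add_sub_cancel_left, coeff_add_geomSeriesXPow a hm, sub_self,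
      if_neg (by omega)]
  · rw [if_neg hk, mul_zero, sub_zero]
    rcases Nat.eq_zero_or_pos k with rfl | hk0
    · simp [geomSeriesXPow]
    · rw [coeff_geomSeriesXPow_of_not_dvd a fun h => hk (Nat.le_of_dvd hk0 h), if_neg hk0.ne']

theorem invOfUnit_one_sub_C_mul_X_pow [CommRing R] (a : R) {m : ℕ} (hm : 0 < m) :
    invOfUnit (1 - C a * X ^ m) 1 = geomSeriesXPow a m :=
  left_inv_eq_right_inv (invOfUnit_mul _ 1 (by simp [hm.ne']))
    (one_sub_C_mul_X_pow_mul_geomSeriesXPow a hm)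

end GeomSeries

theorem Multiset.prod_map_pow_eq_pow_sum {ι M : Type*} [CommMonoid M] (s : Multiset ι)
    (f : ι → ℕ) (a : M) : (s.map fun i => a ^ f i).prod = a ^ (s.map f).sum := by
  induction s using Multiset.induction_on with
  | empty => simp
  | cons i s ih => simp [ih, pow_add]

theorem Nat.Partition.exists_toFinsuppAntidiag_eq {n N : ℕ} {g : ℕ →₀ ℕ}
    (hg : g ∈ (Icc 1 N).finsuppAntidiag n) (hdvd : ∀ m ∈ Icc 1 N, m ∣ g m) :
    ∃ μ : n.Partition, μ.toFinsuppAntidiag = g := by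
  rw [mem_finsuppAntidiag] at hg
  let parts : Multiset ℕ := ∑ m ∈ Icc 1 N, Multiset.replicate (g m / m) m
  have hcount (k : ℕ) : parts.count k * k = g k := by
    simp only [parts, Multiset.count_sum', Multiset.count_replicate, sum_ite_eq']
    split_ifs with hk
    · exact Nat.div_mul_cancel (hdvd k hk)
    · rw [zero_mul, Finsupp.notMem_support_iff.mp fun h => hk (hg.2 h)]
  refine ⟨⟨parts, fun {k} hk => ?_, ?_⟩, Finsupp.ext hcount⟩
  · obtain ⟨m, hm, hkm⟩ := Multiset.mem_sum.mp hk
    rw [Multiset.eq_of_mem_replicate hkm]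
    exact (mem_Icc.mp hm).1
  · rw [← hg.1]
    refine (map_sum Multiset.sumAddMonoidHom _ _).trans (sum_congr rfl fun m hm => ?_)
    simp [Nat.div_mul_cancel (hdvd m hm)]

theorem coeff_prod_geomSeriesXPow {R : Type*} [CommSemiring R] (a : ℕ → R) {n N : ℕ}
    (hN : n ≤ N) :
    coeff n (∏ m ∈ Icc 1 N, geomSeriesXPow (a m) m)
      = ∑ μ : n.Partition, (μ.parts.map a).prod := by
  rw [coeff_prod]
  refine (sum_of_injOn Nat.Partition.toFinsuppAntidiag
    (Nat.Partition.toFinsuppAntidiag_injective n).injOn (fun μ _ => ?_) (fun g hg hgμ => ?_)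
    (fun μ _ => ?_)).symm
  · exact finsuppAntidiag_mono (Icc_subset_Icc_right hN) n
      μ.toFinsuppAntidiag_mem_finsuppAntidiag
  · by_contra hne
    have hdvd : ∀ m ∈ Icc 1 N, m ∣ g m := fun m hm => by
      by_contra h
      exact hne (prod_eq_zero hm (coeff_geomSeriesXPow_of_not_dvd _ h))
    obtain ⟨μ, rfl⟩ := Nat.Partition.exists_toFinsuppAntidiag_eq hg hdvd
    exact hgμ ⟨μ, mem_univ μ, rfl⟩
  · have hsub : μ.parts.toFinset ⊆ Icc 1 N := fun m hm => by
      have := Multiset.mem_toFinset.mp hm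
      exact mem_Icc.mpr ⟨μ.parts_pos this, (μ.le_of_mem_parts this).trans hN⟩
    rw [prod_multiset_map_count, prod_subset hsub fun m _ hm => by
      rw [Multiset.count_eq_zero.mpr (by simpa using hm), pow_zero]]
    exact prod_congr rfl fun m hm => (coeff_mul_geomSeriesXPow _ (mem_Icc.mp hm).1 _).symm

theorem sum_range_add_one_eq_choose_two (p : ℕ) : ∑ i ∈ range p, (i + 1) = (p + 1).choose 2 := by
  rw [Nat.choose_two_right, ← sum_range_id, sum_range_succ' (fun i => i)]
  rfl

theorem Multiset.sum_map_sum_range_le {f : ℕ → ℕ} (hf : Monotone f) (s : Multiset ℕ) :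
    (s.map fun p => ∑ i ∈ Finset.range p, f i).sum ≤ ∑ i ∈ Finset.range s.sum, f i := by
  induction s using Multiset.induction_on with
  | empty => simp
  | cons a s ih =>
    rw [Multiset.map_cons, Multiset.sum_cons, Multiset.sum_cons, sum_range_add]
    exact add_le_add_right (ih.trans (sum_le_sum fun i _ => hf (Nat.le_add_left i a))) _

/-- When `a` lists the parts of a partition in non-increasing order, these are the parts of its
conjugate. -/
def conjParts (a : ℕ → ℕ) (n : ℕ) : Multiset ℕ :=
  ∑ j ∈ range n, Multiset.replicate (a j - a (j + 1)) (j + 1)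

theorem sum_map_conjParts_add {a : ℕ → ℕ} (ha : Antitone a) (f : ℕ → ℕ) (n : ℕ) :
    ((conjParts a n).map fun p => ∑ i ∈ range p, f i).sum + a n * ∑ i ∈ range n, f i
      = ∑ i ∈ range n, f i * a i := by
  induction n with
  | zero => simp [conjParts]
  | succ n ih =>
    have hsplit : conjParts a (n + 1) = conjParts a n + .replicate (a n - a (n + 1)) (n + 1) :=
      sum_range_succ _ _
    have hstep : (a n - a (n + 1)) * ∑ i ∈ range (n + 1), f i
        + a (n + 1) * ∑ i ∈ range (n + 1), f i = a n * ∑ i ∈ range (n + 1), f i := by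
      rw [← add_mul, Nat.sub_add_cancel (ha n.le_succ)]
    rw [hsplit, Multiset.map_add, Multiset.sum_add, Multiset.map_replicate,
      Multiset.sum_replicate, smul_eq_mul, add_assoc, hstep, sum_range_succ f,
      sum_range_succ (fun i => f i * a i), ← ih]
    ring

theorem List.sum_range_getD {l : List ℕ} {n : ℕ} (hn : l.length ≤ n) :
    ∑ i ∈ Finset.range n, l.getD i 0 = l.sum := by
  induction l generalizing n with
  | nil => simp
  | cons x l ih =>
    obtain _ | n := n
    · simp at hn
    rw [Finset.sum_range_succ', List.sum_cons, add_comm x]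
    simp only [List.getD_cons_succ, List.getD_cons_zero]
    rw [ih (by simpa using hn)]

theorem List.SortedGE.antitone_getD {l : List ℕ} (hl : l.SortedGE) :
    Antitone fun i => l.getD i 0 := by
  intro i j hij
  by_cases hj : j < l.length
  · simp only [List.getD_eq_getElem _ _ hj, List.getD_eq_getElem _ _ (hij.trans_lt hj)]
    exact hl.antitone_get (a := ⟨i, hij.trans_lt hj⟩) (b := ⟨j, hj⟩) hij
  · simp only [List.getD_eq_default _ _ (not_lt.mp hj), zero_le]

theorem List.eq_of_getD_eq {l l' : List ℕ} (h0 : 0 ∉ l) (h0' : 0 ∉ l')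
    (h : ∀ i, l.getD i 0 = l'.getD i 0) : l = l' := by
  have hget? {l : List ℕ} (hl : 0 ∉ l) (i : ℕ) :
      l[i]? = if l.getD i 0 = 0 then none else some (l.getD i 0) := by
    rw [List.getD_eq_getElem?_getD]
    cases hi : l[i]? with
    | none => simp
    | some x =>
      have : x ≠ 0 := fun hx => hl (hx ▸ List.mem_of_getElem? hi)
      simp [this]
  exact List.ext_getElem? fun i => by rw [hget? h0, hget? h0', h]

namespace Nat.Partition

variable {n : ℕ}

/-- The `(i + 1)`-st largest part `λᵢ₊₁`, or `0` if there are at most `i` parts. -/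
def rowLen (lam : n.Partition) (i : ℕ) : ℕ := (sortedParts lam).getD i 0

theorem length_sortedParts_le (lam : n.Partition) : (sortedParts lam).length ≤ n := by
  rw [sortedParts, Multiset.length_sort]
  simpa [lam.parts_sum] using Multiset.card_nsmul_le_sum fun _ h => lam.parts_pos h

theorem rowLen_antitone (lam : n.Partition) : Antitone lam.rowLen :=
  (Multiset.pairwise_sort _ _).sortedGE.antitone_getD

theorem rowLen_eq_zero {lam : n.Partition} {i : ℕ} (hi : n ≤ i) : lam.rowLen i = 0 :=
  List.getD_eq_default _ _ ((length_sortedParts_le lam).trans hi)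

theorem sum_range_length_sortedParts (lam : n.Partition) (f : ℕ → ℕ) :
    ∑ i ∈ range (sortedParts lam).length, f i * (sortedParts lam).getD i 0
      = ∑ i ∈ range n, f i * lam.rowLen i := by
  refine sum_subset (range_subset_range.mpr (length_sortedParts_le lam)) fun i _ hi => ?_
  rw [List.getD_eq_default _ _ (by simpa using hi), mul_zero]

theorem sum_range_rowLen (lam : n.Partition) : ∑ i ∈ range n, lam.rowLen i = n := by
  unfold rowLen
  rw [List.sum_range_getD (length_sortedParts_le lam), ← Multiset.sum_coe,
    sortedParts, Multiset.sort_eq, lam.parts_sum]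

theorem rowLen_injective : Function.Injective (rowLen : n.Partition → ℕ → ℕ) := by
  intro lam lam' h
  have hzero (lam : n.Partition) : 0 ∉ sortedParts lam := fun h0 =>
    (lam.parts_pos ((Multiset.mem_sort _).mp h0)).false
  have hsorted := List.eq_of_getD_eq (hzero lam) (hzero lam') (congrFun h)
  rw [Nat.Partition.ext_iff, ← Multiset.sort_eq lam.parts (· ≥ ·),
    ← Multiset.sort_eq lam'.parts (· ≥ ·)]
  exact congrArg _ hsorted

theorem sum_map_conjParts (lam : n.Partition) (f : ℕ → ℕ) :
    ((conjParts lam.rowLen n).map fun p => ∑ i ∈ range p, f i).sum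
      = ∑ i ∈ range n, f i * lam.rowLen i := by
  simpa [rowLen_eq_zero le_rfl] using sum_map_conjParts_add lam.rowLen_antitone f n

def conj (lam : n.Partition) : n.Partition where
  parts := conjParts lam.rowLen n
  parts_pos {p} hp := by
    obtain ⟨j, -, hj⟩ := Multiset.mem_sum.mp hp
    rw [Multiset.eq_of_mem_replicate hj]
    exact j.succ_pos
  parts_sum := by simpa [sum_range_rowLen] using lam.sum_map_conjParts fun _ => 1

theorem conj_injective : Function.Injective (conj : n.Partition → n.Partition) := by
  intro lam lam' h
  refine rowLen_injective (funext fun k => ?_)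
  have hrow (lam : n.Partition) : lam.rowLen k
      = ((conj lam).parts.map fun p => ∑ i ∈ range p, if i = k then 1 else 0).sum := by
    rw [conj, sum_map_conjParts]
    by_cases hk : k < n
    · simp [hk]
    · simp [rowLen_eq_zero (not_lt.mp hk)]
  rw [hrow, hrow, h]

theorem sum_map_choose_two_conj (lam : n.Partition) :
    ((conj lam).parts.map fun p => (p + 1).choose 2).sum
      = ∑ i ∈ range n, (i + 1) * lam.rowLen i := by
  simp only [← sum_range_add_one_eq_choose_two]
  exact lam.sum_map_conjParts (· + 1)

theorem choose_two_sub_gini (lam : n.Partition) :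
    (n + 1).choose 2 - gini lam = ∑ i ∈ range n, (i + 1) * lam.rowLen i := by
  have hle : ∑ i ∈ range n, (i + 1) * lam.rowLen i ≤ (n + 1).choose 2 :=
    calc ∑ i ∈ range n, (i + 1) * lam.rowLen i
        = ((conj lam).parts.map fun p => ∑ i ∈ range p, (i + 1)).sum :=
          (lam.sum_map_conjParts _).symm
      _ ≤ ∑ i ∈ range (conj lam).parts.sum, (i + 1) :=
          Multiset.sum_map_sum_range_le (fun _ _ h => Nat.succ_le_succ h) _
      _ = (n + 1).choose 2 := by rw [(conj lam).parts_sum, sum_range_add_one_eq_choose_two]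
  rw [gini, sum_range_length_sortedParts lam (· + 1), Nat.sub_sub_self hle]

end Nat.Partition

theorem gini_stmt5_general (n : ℕ) (N : ℕ) (hN : n ≤ N) :
    PowerSeries.coeff (R := Polynomial ℤ) n (∏ m ∈ Finset.Icc 1 N, ginFactorInv m)
      = ∑ lam : Nat.Partition n,
          (Polynomial.X : Polynomial ℤ) ^ ((n + 1).choose 2 - gini lam) := by
  have hfactor : ∀ m ∈ Icc 1 N,
      ginFactorInv m = geomSeriesXPow (Polynomial.X ^ (m + 1).choose 2) m :=
    fun m hm => invOfUnit_one_sub_C_mul_X_pow _ (mem_Icc.mp hm).1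
  rw [prod_congr rfl hfactor, coeff_prod_geomSeriesXPow _ hN]
  simp only [Multiset.prod_map_pow_eq_pow_sum]
  refine (Fintype.sum_bijective _ Nat.Partition.conj_injective.bijective_of_finite _ _
    fun lam => ?_).symm
  rw [Nat.Partition.choose_two_sub_gini, Nat.Partition.sum_map_choose_two_conj]

/-- In `ℤ[q][[x]]`,
`∏_{m≥1} (1 − q^{C(m+1,2)} x^m)^{-1} − 1 = Σ_{n≥1} (Σ_{λ ⊢ n} q^{C(n+1,2) − g(λ)}) x^n`;
equivalently, for every `n ≥ 1` the coefficient of `x^n` in the infinite product (which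
is already captured by any finite truncation `∏_{m=1}^{N}` with `N ≥ n`) equals
`Σ_{λ ⊢ n} q^{C(n+1,2) − g(λ)}`. -/
theorem gini_stmt5 (n : ℕ) (hn : 0 < n) (N : ℕ) (hN : n ≤ N) :
    PowerSeries.coeff (R := Polynomial ℤ) n (∏ m ∈ Finset.Icc 1 N, ginFactorInv m)
      = ∑ lam : Nat.Partition n,
          (Polynomial.X : Polynomial ℤ) ^ ((n + 1).choose 2 - gini lam) :=
  gini_stmt5_general n N hN
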